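/- Let α ∈ (0,1) be irrational with convergents p_n/q_n and n ≥ 1 odd. If k ∈ {1, …, q_{n+1} − 1} and p ∈ ℤ satisfy −{q_{n−1}α} < kα + p < 0 (where {q_{n−1}α} = q_{n−1}α − p_{n−1}), then k = i·q_n and p = −i·p_n for some i ∈ {1, …, a_{n+1}}, where a_{n+1} is the (n+1)-st partial quotient of α. -/

import Mathlib

/-!
Write `β_j = q_j α - p_j`. Since `q_m p_{m+1} - q_{m+1} p_m = 1` for even `m = n - 1`, every pair
`(k, p)` has integer coordinates `(x, y)` with `(k, p) = x (q_m, -p_m) + y (q_{m+1}, -p_{m+1})`, so that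
`k α + p = x β_m + y β_{m+1}`. Here `β_m > 0 > β_{m+1}` and `β_m = |β_{m+1}| / α_{m+1}`, so
`a_{m+2} |β_{m+1}| ≤ β_m < (a_{m+2} + 1) |β_{m+1}|`. A short case analysis on the sign of `x`, using
`1 ≤ k < q_{m+2} = q_m + a_{m+2} q_{m+1}`, then forces `x = 0` and `1 ≤ y ≤ a_{m+2}`.
-/

open scoped BigOperators

/-- The Gauss map `x ↦ 1/x - ⌊1/x⌋` (with `G 0 = 0`). -/
noncomputable def gaussMap (x : ℝ) : ℝ := if x = 0 then 0 else 1 / x - ⌊1 / x⌋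

/-- Iterates `α_n = G^n(α)` of the Gauss map. -/
noncomputable def alphaSeq (α : ℝ) (n : ℕ) : ℝ := gaussMap^[n] α

/-- Partial quotients `a_n` of the continued fraction of `α`. -/
noncomputable def aSeq (α : ℝ) : ℕ → ℤ
  | 0 => 0
  | n + 1 => ⌊1 / alphaSeq α n⌋

/-- Denominators `q_n` of the best rational approximations of `α`. -/
noncomputable def qSeq (α : ℝ) : ℕ → ℤ
  | 0 => 1
  | 1 => ⌊1 / α⌋
  | n + 2 => qSeq α n + aSeq α (n + 2) * qSeq α (n + 1)

/-- Numerators `p_n` of the best rational approximations of `α`. -/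
noncomputable def pSeq (α : ℝ) : ℕ → ℤ
  | 0 => 0
  | 1 => 1
  | n + 2 => pSeq α n + aSeq α (n + 2) * pSeq α (n + 1)

lemma exists_coords_of_det_eq_one {q₀ q₁ p₀ p₁ : ℤ} (h : q₀ * p₁ - q₁ * p₀ = 1) (k p : ℤ) :
    ∃ x y : ℤ, k = x * q₀ + y * q₁ ∧ p = -(x * p₀ + y * p₁) :=
  ⟨p₁ * k + q₁ * p, -(p₀ * k + q₀ * p), by linear_combination k * h.symm,
    by linear_combination p * h.symm⟩

lemma lattice_coords_of_neg_near_zero {q₀ q₁ a x y : ℤ} {A B : ℝ}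
    (hq₀ : 0 ≤ q₀) (hq₁ : 1 ≤ q₁) (ha : 0 ≤ a) (hB : 0 < B)
    (haA : a * B ≤ A) (hAa : A < (a + 1) * B)
    (hk₁ : 1 ≤ x * q₀ + y * q₁) (hk₂ : x * q₀ + y * q₁ < q₀ + a * q₁)
    (hlow : -A < x * A - y * B) (hup : x * A - y * B < 0) :
    x = 0 ∧ 1 ≤ y ∧ y ≤ a := by
  have hA : 0 ≤ A := (mul_nonneg (by exact_mod_cast ha) hB.le).trans haA
  rcases lt_trichotomy x 0 with hx | rfl | hx
  · have hxR : (x : ℝ) + 1 ≤ 0 := by exact_mod_cast (show x + 1 ≤ 0 by omega)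
    have hy : y < 0 := by
      have : (y : ℝ) * B < 0 := by nlinarith
      exact_mod_cast neg_of_mul_neg_left this hB.le
    nlinarith
  · simp only [Int.cast_zero, zero_mul, zero_sub, neg_lt_neg_iff, Left.neg_neg_iff] at hlow hup
    have hy₁ : 0 < y := by exact_mod_cast pos_of_mul_pos_left hup hB.le
    have hy₂ : y < a + 1 := by exact_mod_cast lt_of_mul_lt_mul_right (hlow.trans hAa) hB.le
    exact ⟨rfl, hy₁, by omega⟩
  · have hxR : (1 : ℝ) ≤ x := by exact_mod_cast hx
    have hy : x * a < y := by
      have : ((x * a : ℤ) : ℝ) * B < y * B := by push_cast; nlinarith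
      exact_mod_cast lt_of_mul_lt_mul_right this hB.le
    nlinarith

section ContinuedFraction

variable {α : ℝ}

lemma gaussMap_eq_fract {x : ℝ} (hx : x ≠ 0) : gaussMap x = Int.fract (1 / x) := if_neg hx

lemma gaussMap_mem_Ioo {x : ℝ} (hx : x ∈ Set.Ioo (0 : ℝ) 1) (hirr : Irrational x) :
    gaussMap x ∈ Set.Ioo (0 : ℝ) 1 ∧ Irrational (gaussMap x) := by
  rw [gaussMap_eq_fract hx.1.ne']
  have hirr' : Irrational (Int.fract (1 / x)) := by
    rw [one_div, Int.fract]
    exact irrational_sub_intCast_iff.mpr (irrational_inv_iff.mpr hirr)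
  refine ⟨⟨(Int.fract_nonneg _).lt_of_ne ?_, Int.fract_lt_one _⟩, hirr'⟩
  exact fun h => hirr'.ne_int 0 (by rw [← h, Int.cast_zero])

lemma alphaSeq_succ_eq_gaussMap (m : ℕ) : alphaSeq α (m + 1) = gaussMap (alphaSeq α m) :=
  Function.iterate_succ_apply' _ _ _

lemma alphaSeq_mem_Ioo (hα : α ∈ Set.Ioo (0 : ℝ) 1) (hirr : Irrational α) (m : ℕ) :
    alphaSeq α m ∈ Set.Ioo (0 : ℝ) 1 ∧ Irrational (alphaSeq α m) := by
  induction m with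
  | zero => exact ⟨hα, hirr⟩
  | succ m ih => rw [alphaSeq_succ_eq_gaussMap]; exact gaussMap_mem_Ioo ih.1 ih.2

lemma alphaSeq_succ (hα : α ∈ Set.Ioo (0 : ℝ) 1) (hirr : Irrational α) (m : ℕ) :
    alphaSeq α (m + 1) = 1 / alphaSeq α m - aSeq α (m + 1) := by
  rw [alphaSeq_succ_eq_gaussMap, gaussMap, if_neg (alphaSeq_mem_Ioo hα hirr m).1.1.ne', aSeq]

lemma one_le_aSeq_succ (hα : α ∈ Set.Ioo (0 : ℝ) 1) (hirr : Irrational α) (m : ℕ) :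
    1 ≤ aSeq α (m + 1) := by
  obtain ⟨h₀, h₁⟩ := (alphaSeq_mem_Ioo hα hirr m).1
  exact Int.le_floor.mpr (by exact_mod_cast (one_lt_one_div h₀ h₁).le)

lemma one_le_qSeq (hα : α ∈ Set.Ioo (0 : ℝ) 1) (hirr : Irrational α) : ∀ m, 1 ≤ qSeq α m
  | 0 => le_rfl
  | 1 => one_le_aSeq_succ hα hirr 0
  | m + 2 => by
    have := one_le_qSeq hα hirr m
    have := one_le_qSeq hα hirr (m + 1)
    have := one_le_aSeq_succ hα hirr (m + 1)
    rw [qSeq]; nlinarith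

lemma qSeq_succ_succ (m : ℕ) :
    qSeq α (m + 2) = qSeq α m + aSeq α (m + 2) * qSeq α (m + 1) := rfl

lemma pSeq_succ_succ (m : ℕ) :
    pSeq α (m + 2) = pSeq α m + aSeq α (m + 2) * pSeq α (m + 1) := rfl

lemma qSeq_mul_pSeq_sub (m : ℕ) :
    qSeq α m * pSeq α (m + 1) - qSeq α (m + 1) * pSeq α m = (-1) ^ m := by
  induction m with
  | zero => simp [qSeq, pSeq]
  | succ m ih =>
    rw [qSeq_succ_succ, pSeq_succ_succ, pow_succ, ← ih]
    ring

noncomputable def betaSeq (α : ℝ) (m : ℕ) : ℝ := qSeq α m * α - pSeq α m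

lemma betaSeq_succ_succ (m : ℕ) :
    betaSeq α (m + 2) = betaSeq α m + aSeq α (m + 2) * betaSeq α (m + 1) := by
  simp only [betaSeq, qSeq_succ_succ, pSeq_succ_succ]; push_cast; ring

lemma betaSeq_succ (hα : α ∈ Set.Ioo (0 : ℝ) 1) (hirr : Irrational α) (m : ℕ) :
    betaSeq α (m + 1) = -alphaSeq α (m + 1) * betaSeq α m := by
  induction m with
  | zero =>
    rw [alphaSeq_succ hα hirr 0]
    simp only [betaSeq, qSeq, pSeq, aSeq, alphaSeq, Function.iterate_zero, id]
    field_simp [hα.1.ne']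
    push_cast
    ring
  | succ m ih =>
    have := (alphaSeq_mem_Ioo hα hirr (m + 1)).1.1.ne'
    rw [betaSeq_succ_succ, alphaSeq_succ hα hirr (m + 1), ih]
    field_simp
    ring

lemma neg_one_pow_mul_betaSeq_pos (hα : α ∈ Set.Ioo (0 : ℝ) 1) (hirr : Irrational α) (m : ℕ) :
    0 < (-1) ^ m * betaSeq α m := by
  induction m with
  | zero => simpa [betaSeq, qSeq, pSeq] using hα.1
  | succ m ih =>
    have := (alphaSeq_mem_Ioo hα hirr (m + 1)).1.1
    rw [betaSeq_succ hα hirr m, pow_succ]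
    nlinarith

lemma aSeq_mul_abs_betaSeq_le (hα : α ∈ Set.Ioo (0 : ℝ) 1) (hirr : Irrational α) (m : ℕ) :
    aSeq α (m + 2) * |betaSeq α (m + 1)| ≤ |betaSeq α m| ∧
      |betaSeq α m| < (aSeq α (m + 2) + 1) * |betaSeq α (m + 1)| := by
  have hpos := (alphaSeq_mem_Ioo hα hirr (m + 1)).1.1
  have hβ : |betaSeq α m| = 1 / alphaSeq α (m + 1) * |betaSeq α (m + 1)| := by
    rw [betaSeq_succ hα hirr, abs_mul, abs_neg, abs_of_pos hpos]
    field_simp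
  have hβ₁ : 0 < |betaSeq α (m + 1)| :=
    abs_pos.mpr (right_ne_zero_of_mul (neg_one_pow_mul_betaSeq_pos hα hirr (m + 1)).ne')
  rw [hβ]
  exact ⟨mul_le_mul_of_nonneg_right (Int.floor_le _) hβ₁.le,
    mul_lt_mul_of_pos_right (Int.lt_floor_add_one _) hβ₁⟩

end ContinuedFraction

theorem stmt14_general (α : ℝ) (hα : α ∈ Set.Ioo (0 : ℝ) 1) (hirr : Irrational α)
    (n : ℕ) (hodd : Odd n) (k p : ℤ)
    (hk1 : 1 ≤ k) (hk2 : k ≤ qSeq α (n + 1) - 1)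
    (hlow : -((qSeq α (n - 1) : ℝ) * α - (pSeq α (n - 1) : ℝ)) < (k : ℝ) * α + (p : ℝ))
    (hup : (k : ℝ) * α + (p : ℝ) < 0) :
    ∃ i : ℤ, 1 ≤ i ∧ i ≤ aSeq α (n + 1) ∧ k = i * qSeq α n ∧ p = -i * pSeq α n := by
  obtain ⟨m, rfl⟩ := hodd
  have hm : Even (2 * m) := even_two_mul m
  rw [Nat.add_sub_cancel] at hlow
  obtain ⟨x, y, rfl, rfl⟩ := exists_coords_of_det_eq_one
    (by rw [qSeq_mul_pSeq_sub, hm.neg_one_pow] : qSeq α (2 * m) * pSeq α (2 * m + 1)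
      - qSeq α (2 * m + 1) * pSeq α (2 * m) = 1) k p
  have hβ₀ : 0 < betaSeq α (2 * m) := by
    simpa [hm.neg_one_pow] using neg_one_pow_mul_betaSeq_pos hα hirr (2 * m)
  have hβ₁ : 0 < -betaSeq α (2 * m + 1) := by
    simpa [pow_succ, hm.neg_one_pow] using neg_one_pow_mul_betaSeq_pos hα hirr (2 * m + 1)
  have hval : ((x * qSeq α (2 * m) + y * qSeq α (2 * m + 1) : ℤ) : ℝ) * α
      + ((-(x * pSeq α (2 * m) + y * pSeq α (2 * m + 1)) : ℤ) : ℝ)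
      = x * betaSeq α (2 * m) - y * -betaSeq α (2 * m + 1) := by
    simp only [betaSeq]; push_cast; ring
  obtain ⟨hlo, hhi⟩ := aSeq_mul_abs_betaSeq_le hα hirr (2 * m)
  rw [abs_of_pos hβ₀, abs_of_neg (neg_pos.mp hβ₁)] at hlo hhi
  rw [hval] at hlow hup
  obtain ⟨rfl, hy₁, hy₂⟩ := lattice_coords_of_neg_near_zero
    (zero_le_one.trans (one_le_qSeq hα hirr _)) (one_le_qSeq hα hirr _)
    (zero_le_one.trans (one_le_aSeq_succ hα hirr _)) hβ₁ hlo hhi hk1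
    (by rw [qSeq_succ_succ] at hk2; linarith) hlow hup
  exact ⟨y, hy₁, hy₂, by ring, by ring⟩

/-- Let `α ∈ (0,1)` be irrational with convergents `p_n/q_n`, `n ≥ 1` odd. If
`k ∈ {1,…,q_{n+1}−1}` and `p ∈ ℤ` satisfy `−{q_{n−1}α} < kα + p < 0`
(where `{q_{n−1}α} = q_{n−1}α − p_{n−1}`), then `k = i·q_n` and `p = −i·p_n`
for some `i ∈ {1,…,a_{n+1}}`. -/
theorem stmt14 (α : ℝ) (hα : α ∈ Set.Ioo (0 : ℝ) 1) (hirr : Irrational α)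
    (n : ℕ) (hodd : Odd n) (hn : 1 ≤ n) (k p : ℤ)
    (hk1 : 1 ≤ k) (hk2 : k ≤ qSeq α (n + 1) - 1)
    (hlow : -((qSeq α (n - 1) : ℝ) * α - (pSeq α (n - 1) : ℝ)) < (k : ℝ) * α + (p : ℝ))
    (hup : (k : ℝ) * α + (p : ℝ) < 0) :
    ∃ i : ℤ, 1 ≤ i ∧ i ≤ aSeq α (n + 1) ∧ k = i * qSeq α n ∧ p = -i * pSeq α n :=
  stmt14_general α hα hirr n hodd k p hk1 hk2 hlow hup
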